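/- arXiv:1304.3159 — 2 statements merged into one kernel-verified Lean document; each statement's English description precedes it below -/
import Mathlib

section
/- Let ν > 1 be real and let z ∈ ℂ satisfy Re(z) < ν. Then ∫_0^∞ [e^{yz} − 1 − (e^y − 1)·z] · e^{−ν y} · y^{−2} dy = (ν − z)·log(ν − z) − ν·log ν + z·( log(ν − 1) − ν·log((ν−1)/ν) ), where log denotes the principal complex logarithm. (This is the α_R = 1 special case of the symbol identity for ℒ_R in the GTSP/CGMY/KoBoL model; the paper expresses the coefficient of z as log(ν−1) − 2ν·coth⁻¹(1−2ν), which equals log(ν−1) − ν·log((ν−1)/ν).) -/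
/-!
Write the integrand as `G (ν - z) - z * G (ν - 1)`, where, for a base point `a` with `0 < re a`,
`G w = ∫ (e^{-wy} - e^{-ay} + (w - a) y e^{-ay}) / y² dy`. Differentiating under the integral
sign, `G' = F` with the Frullani integral `F w = ∫ (e^{-ay} - e^{-wy}) / y dy`, and
`F' w = ∫ e^{-wy} dy = 1/w`; domination comes from the Taylor bounds
`|e^u - e^v| ≤ e^{max} |u - v|` and `|e^u - e^v - (u - v) e^v| ≤ e^{max} |u - v|²`.
As `F a = G a = 0` and the half-plane `0 < re w` is connected, `F w = log w - log a` and `G w = w (log w - log a) - w + a`.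
-/

open MeasureTheory Set Complex

theorem Complex.norm_exp_sub_exp_le (a b : ℂ) :
    ‖cexp a - cexp b‖ ≤ Real.exp (max a.re b.re) * ‖a - b‖ :=
  (convex_halfSpace_re_le (max a.re b.re)).norm_image_sub_le_of_norm_hasDerivWithin_le
    (fun u _ ↦ (hasDerivAt_exp u).hasDerivWithinAt)
    (fun u hu ↦ by rw [norm_exp]; exact Real.exp_le_exp.2 hu)
    (show b.re ≤ _ from le_max_right _ _) (show a.re ≤ _ from le_max_left _ _)

theorem Complex.norm_exp_sub_exp_sub_mul_exp_le (a b : ℂ) :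
    ‖cexp a - cexp b - (a - b) * cexp b‖ ≤ Real.exp (max a.re b.re) * ‖a - b‖ ^ 2 := by
  set s := {u : ℂ | u.re ≤ max a.re b.re} ∩ Metric.closedBall b ‖a - b‖
  have hs : Convex ℝ s := (convex_halfSpace_re_le _).inter (convex_closedBall _ _)
  have hderiv (u : ℂ) : HasDerivAt (fun u ↦ cexp u - u * cexp b) (cexp u - cexp b) u := by
    simpa using (hasDerivAt_exp u).fun_sub ((hasDerivAt_id u).mul_const (cexp b))
  have hbound (u : ℂ) (hu : u ∈ s) : ‖cexp u - cexp b‖ ≤ Real.exp (max a.re b.re) * ‖a - b‖ :=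
    (norm_exp_sub_exp_le u b).trans <|
      mul_le_mul (Real.exp_le_exp.2 (max_le hu.1 (le_max_right _ _)))
        (by simpa [dist_eq_norm] using hu.2) (norm_nonneg _) (Real.exp_pos _).le
  have hb : b ∈ s :=
    ⟨show b.re ≤ _ from le_max_right _ _, Metric.mem_closedBall_self (norm_nonneg _)⟩
  have ha : a ∈ s := ⟨show a.re ≤ _ from le_max_left _ _, by simp [dist_eq_norm]⟩
  calc ‖cexp a - cexp b - (a - b) * cexp b‖
      = ‖(cexp a - a * cexp b) - (cexp b - b * cexp b)‖ := by ring_nf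
    _ ≤ Real.exp (max a.re b.re) * ‖a - b‖ * ‖a - b‖ :=
      hs.norm_image_sub_le_of_norm_hasDerivWithin_le (fun u _ ↦ (hderiv u).hasDerivWithinAt)
        hbound hb ha
    _ = _ := by ring

noncomputable def frullaniKernel (a w : ℂ) (y : ℝ) : ℂ :=
  (cexp (-a * y) - cexp (-w * y)) / y

noncomputable def remainderKernel (a w : ℂ) (y : ℝ) : ℂ :=
  (cexp (-w * y) - cexp (-a * y) + (w - a) * y * cexp (-a * y)) / y ^ 2

variable {a w : ℂ} {y : ℝ}

lemma max_re_neg_mul_ofReal (a w : ℂ) (hy : 0 ≤ y) :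
    max (-a * y).re (-w * y).re = -min a.re w.re * y := by
  simp only [neg_mul, neg_re, re_mul_ofReal, max_neg_neg, min_mul_of_nonneg _ _ hy]

lemma norm_frullaniKernel_le (a w : ℂ) (hy : 0 < y) :
    ‖frullaniKernel a w y‖ ≤ ‖w - a‖ * Real.exp (-min a.re w.re * y) := by
  have h := norm_exp_sub_exp_le (-a * y) (-w * y)
  rw [max_re_neg_mul_ofReal a w hy.le, show -a * y - -w * y = (w - a) * (y : ℂ) by ring,
    norm_mul, norm_real, Real.norm_of_nonneg hy.le] at h
  rw [frullaniKernel, norm_div, norm_real, Real.norm_of_nonneg hy.le, div_le_iff₀ hy]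
  linarith

lemma norm_remainderKernel_le (a w : ℂ) (hy : 0 < y) :
    ‖remainderKernel a w y‖ ≤ ‖w - a‖ ^ 2 * Real.exp (-min a.re w.re * y) := by
  have hdiff : ‖-w * y - -a * y‖ = ‖w - a‖ * y := by
    rw [show -w * y - -a * y = -((w - a) * (y : ℂ)) by ring, norm_neg, norm_mul, norm_real,
      Real.norm_of_nonneg hy.le]
  rw [remainderKernel, norm_div, norm_pow, norm_real, Real.norm_of_nonneg hy.le,
    div_le_iff₀ (by positivity)]
  calc ‖cexp (-w * y) - cexp (-a * y) + (w - a) * y * cexp (-a * y)‖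
      = ‖cexp (-w * y) - cexp (-a * y) - (-w * y - -a * y) * cexp (-a * y)‖ := by ring_nf
    _ ≤ Real.exp (max (-w * y).re (-a * y).re) * ‖-w * y - -a * y‖ ^ 2 :=
      norm_exp_sub_exp_sub_mul_exp_le _ _
    _ = ‖w - a‖ ^ 2 * Real.exp (-min a.re w.re * y) * y ^ 2 := by
      rw [max_comm, max_re_neg_mul_ofReal a w hy.le, hdiff]; ring

lemma continuousOn_frullaniKernel (a w : ℂ) : ContinuousOn (frullaniKernel a w) (Ioi 0) := by
  unfold frullaniKernel
  fun_prop (disch := exact fun y hy ↦ ofReal_ne_zero.2 (ne_of_gt hy))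

lemma continuousOn_remainderKernel (a w : ℂ) : ContinuousOn (remainderKernel a w) (Ioi 0) := by
  refine ContinuousOn.div (by fun_prop) (by fun_prop) fun y hy ↦ ?_
  exact pow_ne_zero 2 (ofReal_ne_zero.2 (ne_of_gt hy))

lemma integrableOn_Ioi_of_norm_le_mul_exp {f : ℝ → ℂ} (hf : ContinuousOn f (Ioi 0)) {C c : ℝ}
    (hc : 0 < c) (hb : ∀ y > 0, ‖f y‖ ≤ C * Real.exp (-c * y)) : IntegrableOn f (Ioi 0) :=
  ((exp_neg_integrableOn_Ioi 0 hc).const_mul C).mono' (hf.aestronglyMeasurable measurableSet_Ioi)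
    ((ae_restrict_iff' measurableSet_Ioi).2 (.of_forall hb))

lemma integrableOn_frullaniKernel (ha : 0 < a.re) (hw : 0 < w.re) :
    IntegrableOn (frullaniKernel a w) (Ioi 0) :=
  integrableOn_Ioi_of_norm_le_mul_exp (continuousOn_frullaniKernel a w) (lt_min ha hw)
    fun _ hy ↦ norm_frullaniKernel_le a w hy

lemma integrableOn_remainderKernel (ha : 0 < a.re) (hw : 0 < w.re) :
    IntegrableOn (remainderKernel a w) (Ioi 0) :=
  integrableOn_Ioi_of_norm_le_mul_exp (continuousOn_remainderKernel a w) (lt_min ha hw)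
    fun _ hy ↦ norm_remainderKernel_le a w hy

lemma hasDerivAt_cexp_neg_mul (w : ℂ) (y : ℝ) :
    HasDerivAt (fun w : ℂ ↦ cexp (-w * y)) (-y * cexp (-w * y)) w := by
  simpa [mul_comm] using ((hasDerivAt_id w).neg.mul_const (y : ℂ)).cexp

lemma hasDerivAt_frullaniKernel (a w : ℂ) (hy : y ≠ 0) :
    HasDerivAt (frullaniKernel a · y) (cexp (-w * y)) w := by
  refine (((hasDerivAt_cexp_neg_mul w y).const_sub (cexp (-a * y))).div_const
    (y : ℂ)).congr_deriv ?_
  field_simp [ofReal_ne_zero.2 hy]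

lemma hasDerivAt_remainderKernel (a w : ℂ) (hy : y ≠ 0) :
    HasDerivAt (remainderKernel a · y) (frullaniKernel a w y) w := by
  refine ((((hasDerivAt_cexp_neg_mul w y).sub_const (cexp (-a * y))).fun_add
    ((((hasDerivAt_id' w).sub_const a).mul_const (y : ℂ)).mul_const (cexp (-a * y)))).div_const
    ((y : ℂ) ^ 2)).congr_deriv ?_
  rw [frullaniKernel]
  field_simp [ofReal_ne_zero.2 hy]
  ring

noncomputable def frullaniIntegral (a w : ℂ) : ℂ :=
  ∫ y in Ioi 0, frullaniKernel a w y

noncomputable def remainderIntegral (a w : ℂ) : ℂ :=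
  ∫ y in Ioi 0, remainderKernel a w y

lemma half_re_lt_re_of_mem_ball {w₀ w : ℂ} (h : w ∈ Metric.ball w₀ (w₀.re / 2)) :
    w₀.re / 2 < w.re := by
  have h₁ := abs_re_le_norm (w - w₀)
  rw [sub_re] at h₁
  linarith [neg_abs_le (w.re - w₀.re), mem_ball_iff_norm.1 h]

lemma integral_cexp_neg_mul (hw : 0 < w.re) : ∫ y in Ioi (0 : ℝ), cexp (-w * y) = w⁻¹ := by
  rw [integral_exp_mul_complex_Ioi (by simpa using hw)]
  simp

lemma hasDerivAt_frullaniIntegral (ha : 0 < a.re) (hw : 0 < w.re) :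
    HasDerivAt (frullaniIntegral a) w⁻¹ w := by
  have hε : 0 < w.re / 2 := half_pos hw
  have key := hasDerivAt_integral_of_dominated_loc_of_deriv_le (μ := volume.restrict (Ioi 0))
    (F := frullaniKernel a) (F' := fun w y ↦ cexp (-w * y)) (x₀ := w)
    (bound := fun y ↦ Real.exp (-(w.re / 2) * y)) (Metric.ball_mem_nhds w hε)
    (.of_forall fun v ↦ (continuousOn_frullaniKernel a v).aestronglyMeasurable measurableSet_Ioi)
    (integrableOn_frullaniKernel ha hw) (by fun_prop) ?_ (exp_neg_integrableOn_Ioi 0 hε) ?_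
  · rw [← integral_cexp_neg_mul hw]
    exact key.2
  all_goals refine (ae_restrict_iff' measurableSet_Ioi).2 (.of_forall fun y (hy : 0 < y) v hv ↦ ?_)
  · have hv' := half_re_lt_re_of_mem_ball hv
    rw [norm_exp, neg_mul, neg_re, re_mul_ofReal, neg_mul]
    gcongr
  · exact hasDerivAt_frullaniKernel a v hy.ne'

lemma hasDerivAt_remainderIntegral (ha : 0 < a.re) (hw : 0 < w.re) :
    HasDerivAt (remainderIntegral a) (frullaniIntegral a w) w := by
  have hε : 0 < w.re / 2 := half_pos hw
  have hm : 0 < min a.re (w.re / 2) := lt_min ha hε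
  have key := hasDerivAt_integral_of_dominated_loc_of_deriv_le (μ := volume.restrict (Ioi 0))
    (F := remainderKernel a) (F' := frullaniKernel a) (x₀ := w)
    (bound := fun y ↦ (‖w - a‖ + w.re / 2) * Real.exp (-min a.re (w.re / 2) * y))
    (Metric.ball_mem_nhds w hε)
    (.of_forall fun v ↦ (continuousOn_remainderKernel a v).aestronglyMeasurable measurableSet_Ioi)
    (integrableOn_remainderKernel ha hw)
    ((continuousOn_frullaniKernel a w).aestronglyMeasurable measurableSet_Ioi) ?_
    ((exp_neg_integrableOn_Ioi 0 hm).const_mul _) ?_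
  · exact key.2
  all_goals refine (ae_restrict_iff' measurableSet_Ioi).2 (.of_forall fun y (hy : 0 < y) v hv ↦ ?_)
  · refine (norm_frullaniKernel_le a v hy).trans ?_
    have hv' := half_re_lt_re_of_mem_ball hv
    gcongr
    linarith [norm_sub_le_norm_sub_add_norm_sub v w a, mem_ball_iff_norm.1 hv]
  · exact hasDerivAt_remainderKernel a v hy.ne'

lemma eq_of_hasDerivAt_eq_of_re_pos {f g d : ℂ → ℂ}
    (hf : ∀ w : ℂ, 0 < w.re → HasDerivAt f (d w) w)
    (hg : ∀ w : ℂ, 0 < w.re → HasDerivAt g (d w) w) (ha : 0 < a.re) (hfg : f a = g a)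
    (hw : 0 < w.re) : f w = g w :=
  IsOpen.eqOn_of_deriv_eq (isOpen_lt continuous_const continuous_re)
    (convex_halfSpace_re_gt 0).isPreconnected
    (fun v hv ↦ (hf v hv).differentiableAt.differentiableWithinAt)
    (fun v hv ↦ (hg v hv).differentiableAt.differentiableWithinAt)
    (fun v hv ↦ (hf v hv).deriv.trans (hg v hv).deriv.symm) ha hfg hw

lemma frullaniIntegral_eq (ha : 0 < a.re) (hw : 0 < w.re) :
    frullaniIntegral a w = log w - log a :=
  eq_of_hasDerivAt_eq_of_re_pos (d := fun v ↦ v⁻¹) (fun _ hv ↦ hasDerivAt_frullaniIntegral ha hv)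
    (fun _ hv ↦ (hasDerivAt_log (Or.inl hv)).sub_const (log a)) ha
    (by simp [frullaniIntegral, frullaniKernel]) hw

lemma remainderIntegral_eq (ha : 0 < a.re) (hw : 0 < w.re) :
    remainderIntegral a w = w * (log w - log a) - w + a := by
  have hderiv (v : ℂ) (hv : 0 < v.re) :
      HasDerivAt (fun v ↦ v * (log v - log a) - v + a) (log v - log a) v := by
    have hv₀ : v ≠ 0 := fun h ↦ by simp [h] at hv
    refine ((((hasDerivAt_id' v).mul ((hasDerivAt_log (Or.inl hv)).sub_const (log a))).sub
      (hasDerivAt_id' v)).add_const a).congr_deriv ?_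
    field_simp
    ring
  exact eq_of_hasDerivAt_eq_of_re_pos
    (fun v hv ↦ frullaniIntegral_eq ha hv ▸ hasDerivAt_remainderIntegral ha hv) hderiv ha
    (by simp [remainderIntegral, remainderKernel]) hw

lemma compensated_exp_mul_eq_remainderKernel_sub (a z : ℂ) (hy : y ≠ 0) :
    (cexp (y * z) - 1 - (cexp y - 1) * z) * (cexp (-a * y) * ((y : ℂ) ^ 2)⁻¹) =
      remainderKernel a (a - z) y - z * remainderKernel a (a - 1) y := by
  have hz : cexp (-(a - z) * y) = cexp (y * z) * cexp (-a * y) := by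
    rw [← exp_add]; ring_nf
  have h₁ : cexp (-(a - 1) * y) = cexp y * cexp (-a * y) := by
    rw [← exp_add]; ring_nf
  simp only [remainderKernel, hz, h₁]
  field_simp [ofReal_ne_zero.2 hy]
  ring

/-- The `α_R = 1` special case of the symbol identity for the right tail of the
GTSP/CGMY/KoBoL model: for `ν > 1` and `Re z < ν`,
`∫_0^∞ [e^{yz} - 1 - (e^y - 1) z] e^{-ν y} y^{-2} dy
  = (ν - z) log (ν - z) - ν log ν + z (log (ν - 1) - ν log ((ν-1)/ν))`,
where `log` is the principal complex logarithm. -/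
theorem stmt_9 (ν : ℝ) (hν : 1 < ν) (z : ℂ) (hz : z.re < ν) :
    ∫ y in Set.Ioi (0 : ℝ),
        (Complex.exp ((y : ℂ) * z) - 1 - (Complex.exp (y : ℂ) - 1) * z) *
          ((Real.exp (-ν * y) * (y ^ 2)⁻¹ : ℝ) : ℂ)
      = ((ν : ℂ) - z) * Complex.log ((ν : ℂ) - z) - (ν : ℂ) * Complex.log (ν : ℂ) +
          z * (Complex.log ((ν : ℂ) - 1) -
            (ν : ℂ) * Complex.log (((ν : ℂ) - 1) / (ν : ℂ))) := by
  have hν₀ : 0 < (ν : ℂ).re := by simpa using zero_lt_one.trans hν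
  have hνz : 0 < ((ν : ℂ) - z).re := by simp [hz]
  have hν₁ : 0 < ((ν : ℂ) - 1).re := by simp [hν]
  have hlog : log (((ν : ℂ) - 1) / ν) = log ((ν : ℂ) - 1) - log ν := by
    rw [← ofReal_one, ← ofReal_sub, ← ofReal_div,
      ← ofReal_log (div_nonneg (by linarith) (by linarith)),
      Real.log_div (by linarith) (by linarith), ofReal_sub, ofReal_log (by linarith), ofReal_log (by linarith)]
  calc _ = ∫ y in Ioi (0 : ℝ), remainderKernel ν (ν - z) y - z * remainderKernel ν (ν - 1) y := by
        refine setIntegral_congr_fun measurableSet_Ioi fun y (hy : 0 < y) ↦ ?_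
        push_cast
        exact compensated_exp_mul_eq_remainderKernel_sub _ _ hy.ne'
    _ = remainderIntegral ν (ν - z) - z * remainderIntegral ν (ν - 1) := by
        rw [integral_sub (integrableOn_remainderKernel hν₀ hνz)
          ((integrableOn_remainderKernel hν₀ hν₁).const_mul z), integral_const_mul]
        rfl
    _ = _ := by
        rw [remainderIntegral_eq hν₀ hνz, remainderIntegral_eq hν₀ hν₁, hlog]
        ring
end

section
/- Lemma 2: Let n ≥ 1, ν > 0 and h > 0. Let A^F_2 be the n×n matrix with −3/(2h) on the main diagonal, 2/h on the first superdiagonal, −1/(2h) on the second superdiagonal and zeros elsewhere. Then the matrix A = ν·I − A^F_2 is an EM-matrix: there exist a real number s > 0 and an n×n real matrix B such that A = s·I − B, B is eventually nonnegative, and 0 < ρ(B) < s, where ρ(B) denotes the spectral radius of B. -/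
/-!
Take `s = ν + 3/(2h) + 1`, so that `B = s•I - A = I + (2/h) N - (1/(2h)) N² = q(N)` for the
nilpotent upper shift `N` and `q = 1 + X r`, `r = 2/h - X/(2h)`. Then `B` is upper triangular with
unit diagonal, so `ρ(B) = 1 < s`. The entry `(i, i + d)` of `B^k` is the coefficient of `X^d` in
`q^k`, namely `∑ j ≤ d, (k choose j) [X^(d-j)] r^j`: a polynomial in `k` of degree `d` with
leading coefficient `(2/h)^d / d! > 0`, hence positive for all large `k`.
-/

open Matrix

/-- The spectral radius of a real square matrix: the supremum of the moduli of its
complex eigenvalues. -/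
noncomputable def specRad {n : ℕ} (B : Matrix (Fin n) (Fin n) ℝ) : ℝ :=
  sSup ((fun z : ℂ => ‖z‖) '' spectrum ℂ (B.map Complex.ofReal))

open Polynomial Finset Filter
open scoped Nat

lemma Polynomial.eventually_pos_eval_of_leadingCoeff_pos {P : ℝ[X]} (hP : 0 < P.leadingCoeff) :
    ∀ᶠ x in atTop, 0 < P.eval x := by
  by_cases hdeg : 0 < P.degree
  · exact (P.tendsto_atTop_of_leadingCoeff_nonneg hdeg hP.le).eventually_gt_atTop 0
  · have hconst := eq_C_of_degree_le_zero (not_lt.1 hdeg)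
    rw [hconst, leadingCoeff_C] at hP
    rw [hconst]
    exact Eventually.of_forall fun _ => by rwa [eval_C]

lemma eventually_pos_sum_choose_mul {d : ℕ} (c : ℕ → ℝ) (hc : 0 < c d) :
    ∀ᶠ k : ℕ in atTop, 0 < ∑ j ∈ range (d + 1), (k.choose j : ℝ) * c j := by
  set P : ℝ[X] := ∑ j ∈ range (d + 1), C (c j / j !) * descPochhammer ℝ j
  have heval (k : ℕ) : P.eval (k : ℝ) = ∑ j ∈ range (d + 1), (k.choose j : ℝ) * c j := by
    simp only [P, eval_finsetSum, eval_mul, eval_C, Nat.cast_choose_eq_descPochhammer_div]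
    exact sum_congr rfl fun j _ => by ring
  have hlead : P.leadingCoeff = c d / d ! := by
    have hlow : (∑ j ∈ range d, C (c j / j !) * descPochhammer ℝ j).degree
        < (C (c d / d !) * descPochhammer ℝ d).degree := by
      rw [degree_C_mul (by positivity), degree_eq_natDegree (monic_descPochhammer ℝ d).ne_zero,
        descPochhammer_natDegree]
      refine (degree_sum_le _ _).trans_lt
        ((Finset.sup_lt_iff (WithBot.bot_lt_coe d)).2 fun j hj => ?_)
      refine (degree_le_of_natDegree_le ((natDegree_C_mul_le _ _).trans
        (descPochhammer_natDegree ℝ j).le)).trans_lt ?_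
      exact WithBot.coe_lt_coe.2 (mem_range.1 hj)
    rw [show P = _ from sum_range_succ _ _, leadingCoeff_add_of_degree_lt hlow, leadingCoeff_mul,
      leadingCoeff_C, (monic_descPochhammer ℝ d).leadingCoeff, mul_one]
  have hpos := eventually_pos_eval_of_leadingCoeff_pos (P := P) (by rw [hlead]; positivity)
  filter_upwards [tendsto_natCast_atTop_atTop.eventually hpos] with k hk
  rwa [← heval]

lemma Polynomial.coeff_one_add_X_mul_pow {R : Type*} [CommSemiring R] (r : R[X]) (k d : ℕ) :
    ((1 + X * r) ^ k).coeff d =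
      ∑ j ∈ range (d + 1), (k.choose j : R) * (r ^ j).coeff (d - j) := by
  set f : ℕ → R := fun j => (k.choose j : R) * if j ≤ d then (r ^ j).coeff (d - j) else 0
  have hterm (j : ℕ) : ((X * r) ^ j * 1 ^ (k - j) * (k.choose j : R[X])).coeff d = f j := by
    rw [one_pow, mul_one, ← C_eq_natCast, coeff_mul_C, mul_pow, coeff_X_pow_mul', mul_comm]
  calc ((1 + X * r) ^ k).coeff d = ∑ j ∈ range (k + 1), f j := by
        rw [add_comm, add_pow, finsetSum_coeff]
        exact sum_congr rfl fun j _ => hterm j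
    _ = ∑ j ∈ range (k + 1 + d), f j := by
        refine sum_subset (range_subset_range.2 (by omega)) fun j _ hj => ?_
        dsimp only [f]
        rw [Nat.choose_eq_zero_of_lt (by simpa using hj), Nat.cast_zero, zero_mul]
    _ = ∑ j ∈ range (d + 1), f j := by
        refine (sum_subset (range_subset_range.2 (by omega)) fun j _ hj => ?_).symm
        dsimp only [f]
        rw [if_neg (by simpa using hj), mul_zero]
    _ = _ := sum_congr rfl fun j hj => by
        dsimp only [f]
        rw [if_pos (by simpa [Nat.lt_succ_iff] using hj)]

lemma Polynomial.eventually_pos_coeff_one_add_X_mul_pow {r : ℝ[X]} (hr : 0 < r.coeff 0)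
    (d : ℕ) :
    ∀ᶠ k : ℕ in atTop, 0 < ((1 + X * r) ^ k).coeff d := by
  have hlead : 0 < (r ^ d).coeff (d - d) := by
    rw [Nat.sub_self, coeff_zero_eq_eval_zero, eval_pow, ← coeff_zero_eq_eval_zero]
    positivity
  simpa only [coeff_one_add_X_mul_pow] using
    eventually_pos_sum_choose_mul (fun j => (r ^ j).coeff (d - j)) hlead

def upperShift (R : Type*) [Zero R] [One R] (n : ℕ) : Matrix (Fin n) (Fin n) R :=
  of fun i j => if (j : ℕ) = i + 1 then 1 else 0

section UpperShift
variable {R : Type*} [CommSemiring R] {n : ℕ}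

lemma upperShift_pow_apply (m : ℕ) (i j : Fin n) :
    (upperShift R n ^ m) i j = if (j : ℕ) = i + m then 1 else 0 := by
  induction m generalizing i with
  | zero => simp [one_apply, Fin.ext_iff, eq_comm]
  | succ m ih =>
    rw [pow_succ', mul_apply]
    simp_rw [ih, upperShift, of_apply, ite_mul, one_mul, zero_mul]
    rw [Fin.sum_univ_eq_sum_range (fun l => if l = (i : ℕ) + 1 then
      (if (j : ℕ) = l + m then (1 : R) else 0) else 0), sum_ite_eq']
    simp only [mem_range]
    split_ifs <;> first | rfl | omega

lemma aeval_upperShift_apply (p : R[X]) (i j : Fin n) :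
    aeval (upperShift R n) p i j = if (i : ℕ) ≤ j then p.coeff (j - i) else 0 := by
  rw [aeval_eq_sum_range, Matrix.sum_apply]
  simp only [Matrix.smul_apply, upperShift_pow_apply, smul_eq_mul, mul_ite, mul_one, mul_zero]
  split_ifs with hij
  · rw [sum_eq_single (j - i : ℕ) (fun m _ hm => if_neg (by omega)) fun hm => ?_,
      if_pos (by omega)]
    rw [mem_range, not_lt] at hm
    rw [if_pos (by omega), coeff_eq_zero_of_natDegree_lt (by omega)]
  · exact sum_eq_zero fun m _ => if_neg (by omega)

lemma isUpperTriangular_aeval_upperShift (p : R[X]) :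
    (aeval (upperShift R n) p).IsUpperTriangular := fun i j hij => by
  rw [aeval_upperShift_apply]; exact if_neg (not_le.2 hij)

lemma diag_aeval_upperShift (p : R[X]) :
    (aeval (upperShift R n) p).diag = fun _ => p.coeff 0 := by
  ext i
  rw [diag_apply, aeval_upperShift_apply, if_pos le_rfl, Nat.sub_self]

end UpperShift

lemma eventually_nonneg_aeval_upperShift_pow {n : ℕ} {r : ℝ[X]} (hr : 0 < r.coeff 0) :
    ∀ᶠ k : ℕ in atTop, ∀ i j, 0 ≤ (aeval (upperShift ℝ n) (1 + X * r) ^ k) i j := by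
  filter_upwards [eventually_all.2 fun d : Fin n => eventually_pos_coeff_one_add_X_mul_pow hr d]
    with k hk i j
  rw [← map_pow, aeval_upperShift_apply]
  split_ifs
  · exact (hk ⟨j - i, by omega⟩).le
  · exact le_rfl

lemma Matrix.spectrum_eq_range_diag_of_isUpperTriangular {K ι : Type*} [Field K] [Fintype ι]
    [DecidableEq ι] [LinearOrder ι] {M : Matrix ι ι K} (hM : M.IsUpperTriangular) :
    spectrum K M = Set.range M.diag := by
  ext μ
  rw [mem_spectrum_iff_isRoot_charpoly, charpoly_of_isUpperTriangular M hM, IsRoot, eval_prod,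
    prod_eq_zero_iff]
  simp [sub_eq_zero, eq_comm]

lemma spectrum_map_ofReal_aeval_upperShift {n : ℕ} [NeZero n] (p : ℝ[X]) :
    spectrum ℂ ((aeval (upperShift ℝ n) p).map Complex.ofReal) = {(p.coeff 0 : ℂ)} := by
  have htri : ((aeval (upperShift ℝ n) p).map Complex.ofReal).IsUpperTriangular :=
    fun i j hij => by rw [map_apply, isUpperTriangular_aeval_upperShift p hij, Complex.ofReal_zero]
  rw [spectrum_eq_range_diag_of_isUpperTriangular htri, diag_map, diag_aeval_upperShift]
  exact Set.range_const

/-- Lemma 2: with `A^F_2` the second-order one-sided forward difference matrix, the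
matrix `A = ν•I - A^F_2` (`ν > 0`, `h > 0`) is an EM-matrix: it can be written as
`A = s•I - B` with `s > 0`, `B` eventually nonnegative, and `0 < ρ(B) < s`. -/
theorem stmt_13 (n : ℕ) (hn : 1 ≤ n) (ν h : ℝ) (hν : 0 < ν) (hh : 0 < h) :
    let AF2 : Matrix (Fin n) (Fin n) ℝ := Matrix.of fun i j =>
      if i = j then -(3 / (2 * h))
      else if (j : ℕ) = (i : ℕ) + 1 then 2 / h
      else if (j : ℕ) = (i : ℕ) + 2 then -(1 / (2 * h))
      else 0
    let A : Matrix (Fin n) (Fin n) ℝ := ν • (1 : Matrix (Fin n) (Fin n) ℝ) - AF2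
    ∃ (s : ℝ) (B : Matrix (Fin n) (Fin n) ℝ), 0 < s ∧
      A = s • (1 : Matrix (Fin n) (Fin n) ℝ) - B ∧
      (∃ k₀ : ℕ, 0 < k₀ ∧ ∀ k ≥ k₀, ∀ i j, 0 ≤ (B ^ k) i j) ∧
      0 < specRad B ∧ specRad B < s := by
  intro AF2 A
  set r : ℝ[X] := C (2 / h) + C (-(1 / (2 * h))) * X
  set B := aeval (upperShift ℝ n) (1 + X * r)
  have hr : 0 < r.coeff 0 := by simpa [r] using hh
  have hρ : specRad B = 1 := by
    have : NeZero n := ⟨by omega⟩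
    rw [specRad, spectrum_map_ofReal_aeval_upperShift, Set.image_singleton, csSup_singleton]
    simp
  refine ⟨ν + 3 / (2 * h) + 1, B, by positivity, ?_, ?_, ?_, ?_⟩
  · ext i j
    simp only [A, AF2, B, Matrix.sub_apply, Matrix.smul_apply, one_apply, of_apply, smul_eq_mul,
      aeval_upperShift_apply, Fin.ext_iff]
    rcases le_or_gt (i : ℕ) j with hij | hji
    · obtain ⟨d, hd⟩ : ∃ d, (j : ℕ) = i + d := ⟨j - i, by omega⟩
      rw [if_pos hij, hd, Nat.add_sub_cancel_left]
      rcases d with _ | _ | _ | d <;> simp [r, coeff_one, coeff_X, coeff_C]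
    · split_ifs <;> first | omega | ring
  · obtain ⟨k₀, hk₀⟩ := eventually_atTop.1 (eventually_nonneg_aeval_upperShift_pow hr)
    exact ⟨k₀ + 1, k₀.succ_pos, fun k hk => hk₀ k (by omega)⟩
  · rw [hρ]
    exact one_pos
  · rw [hρ]
    linarith [show 0 < 3 / (2 * h) by positivity]
end
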